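/- In a Baire base, if A is a non-Baire set with test region D, then for every Baire set B with B ∩ D abundant, there is a subregion C of D essentially contained in B, and consequently both B ∩ A and B ∩ (D − A) are abundant; that is, A is completely non-Baire in D. -/

import Mathlib

structure CatBase (X : Type*) where
  regions : Set (Set X)
  nonempty_X : Nonempty X
  cover : ∀ x : X, ∃ A ∈ regions, x ∈ A
  ax2 : ∀ A ∈ regions, ∀ D : Set (Set X), D ⊆ regions → D.Nonempty →
    D.Pairwise Disjoint → Cardinal.mk D < Cardinal.mk regions →
    ((∃ B ∈ regions, B ⊆ A ∩ ⋃₀ D) → ∃ C ∈ D, ∃ B ∈ regions, B ⊆ A ∩ C) ∧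
    (¬ (∃ B ∈ regions, B ⊆ A ∩ ⋃₀ D) →
      ∃ B ∈ regions, B ⊆ A ∧ ∀ C ∈ D, Disjoint B C)

namespace CatBase

variable {X : Type*}

/-- A set is singular if every region contains a subregion disjoint from it. -/
def Singular (cb : CatBase X) (S : Set X) : Prop :=
  ∀ A ∈ cb.regions, ∃ B ∈ cb.regions, B ⊆ A ∧ Disjoint B S

/-- A set is meager if it is a countable union of singular sets. -/
def Meager (cb : CatBase X) (S : Set X) : Prop :=
  ∃ f : ℕ → Set X, (∀ n, cb.Singular (f n)) ∧ S = ⋃ n, f n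

def Abundant (cb : CatBase X) (S : Set X) : Prop := ¬ cb.Meager S

/-- A set is Baire if every region has a subregion in which the set or its complement is meager. -/
def Baire (cb : CatBase X) (S : Set X) : Prop :=
  ∀ A ∈ cb.regions, ∃ B ∈ cb.regions, B ⊆ A ∧
    (cb.Meager (S ∩ B) ∨ cb.Meager (Sᶜ ∩ B))

end CatBase


/-!
If no subregion of `D` were essentially contained in `B`, then `B ∩ D` would be locally meager:
every region `E` has, by the second axiom, a subregion `F` that is either disjoint from `D` or
contained in `D`, and in the latter case the Baire set `B` is meager on some subregion `G` of `F`,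
because `G \ B` cannot be meager. Banach's category theorem, that locally meager sets are meager,
then contradicts the abundance of `B ∩ D`. It is proved by exhausting the regions with a disjoint
family of regions on which the set is meager, chosen greedily by transfinite recursion along a
well-order of the regions whose initial segments have fewer elements than there are regions, which
is what the second axiom needs.

Given such a subregion `C`, the sets `A ∩ C` and `Aᶜ ∩ C` are abundant since `D` is a test region,
and they lie in `B ∩ A` and `B ∩ (D \ A)` up to the meager set `C \ B`.
-/

open Set Cardinal

namespace CatBase

variable {X : Type*}

section SigmaIdeal

variable {cb : CatBase X} {S T : Set X}

lemma Singular.mono (h : cb.Singular S) (hTS : T ⊆ S) : cb.Singular T := fun A hA =>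
  let ⟨B, hB, hBA, hd⟩ := h A hA
  ⟨B, hB, hBA, hd.mono_right hTS⟩

variable (cb) in
lemma singular_empty : cb.Singular ∅ := fun A hA => ⟨A, hA, subset_rfl, disjoint_bot_right⟩

lemma singular_of_forall_exists_singular_inter
    (h : ∀ A ∈ cb.regions, ∃ B ∈ cb.regions, B ⊆ A ∧ cb.Singular (S ∩ B)) : cb.Singular S := by
  intro A hA
  obtain ⟨B, hB, hBA, hSB⟩ := h A hA
  obtain ⟨B', hB', hB'B, hd⟩ := hSB B hB
  exact ⟨B', hB', hB'B.trans hBA,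
    disjoint_left.2 fun z hz hzS => disjoint_left.1 hd hz ⟨hzS, hB'B hz⟩⟩

lemma meager_of_subset_iUnion {ι : Type*} [Countable ι] (f : ι → Set X)
    (hf : ∀ i, cb.Singular (f i)) (hS : S ⊆ ⋃ i, f i) : cb.Meager S := by
  obtain ⟨e, he⟩ := exists_surjective_nat (Option ι)
  let g : Option ι → Set X := fun o => o.elim ∅ f
  have hg : ∀ o, cb.Singular (g o) := fun o => by
    cases o with
    | none => exact cb.singular_empty
    | some i => exact hf i
  refine ⟨fun n => g (e n) ∩ S, fun n => (hg (e n)).mono inter_subset_left, ?_⟩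
  rw [← iUnion_inter, he.iUnion_comp g, iUnion_option]
  simpa [g] using hS

lemma Singular.meager (h : cb.Singular S) : cb.Meager S :=
  meager_of_subset_iUnion (fun _ : Unit => S) (fun _ => h) (subset_iUnion_of_subset () subset_rfl)

lemma Meager.mono (h : cb.Meager S) (hTS : T ⊆ S) : cb.Meager T := by
  obtain ⟨f, hf, rfl⟩ := h
  exact meager_of_subset_iUnion f hf hTS

variable (cb) in
lemma meager_empty : cb.Meager ∅ := (singular_empty cb).meager

lemma Meager.iUnion {ι : Type*} [Countable ι] {f : ι → Set X} (h : ∀ i, cb.Meager (f i)) :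
    cb.Meager (⋃ i, f i) := by
  choose g hg hfg using h
  refine meager_of_subset_iUnion (fun p : ι × ℕ => g p.1 p.2) (fun p => hg p.1 p.2) ?_
  refine iUnion_subset fun i => ?_
  rw [hfg i]
  exact iUnion_subset fun n => subset_iUnion (fun p : ι × ℕ => g p.1 p.2) (i, n)

lemma Meager.union (hS : cb.Meager S) (hT : cb.Meager T) : cb.Meager (S ∪ T) := by
  rw [union_eq_iUnion]
  exact Meager.iUnion (Bool.forall_bool.2 ⟨hT, hS⟩)

lemma Abundant.of_meager_diff (hS : cb.Abundant S) (h : cb.Meager (S \ T)) : cb.Abundant T :=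
  fun hT => hS ((hT.union h).mono (sdiff_subset_iff.1 subset_rfl))

end SigmaIdeal

variable (cb : CatBase X)

lemma exists_subregion_subset_mem_or_disjoint {A : Set X} (hA : A ∈ cb.regions)
    {𝒟 : Set (Set X)} (h𝒟 : 𝒟 ⊆ cb.regions) (hdisj : 𝒟.Pairwise Disjoint)
    (hcard : #𝒟 < #cb.regions) :
    ∃ B ∈ cb.regions, B ⊆ A ∧ ((∃ C ∈ 𝒟, B ⊆ C) ∨ ∀ C ∈ 𝒟, Disjoint B C) := by
  rcases 𝒟.eq_empty_or_nonempty with rfl | hne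
  · exact ⟨A, hA, subset_rfl, Or.inr fun _ h => h.elim⟩
  have hax := cb.ax2 A hA 𝒟 h𝒟 hne hdisj hcard
  by_cases hU : ∃ B ∈ cb.regions, B ⊆ A ∩ ⋃₀ 𝒟
  · obtain ⟨C, hC, B, hB, hBAC⟩ := hax.1 hU
    exact ⟨B, hB, hBAC.trans inter_subset_left, Or.inl ⟨C, hC, hBAC.trans inter_subset_right⟩⟩
  · obtain ⟨B, hB, hBA, hd⟩ := hax.2 hU
    exact ⟨B, hB, hBA, Or.inr hd⟩

lemma exists_subregion_subset_or_disjoint {A D : Set X} (hA : A ∈ cb.regions)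
    (hD : D ∈ cb.regions) : ∃ B ∈ cb.regions, B ⊆ A ∧ (B ⊆ D ∨ Disjoint B D) := by
  by_cases hAD : A = D
  · exact ⟨A, hA, subset_rfl, Or.inl hAD.le⟩
  have hcard : #({D} : Set (Set X)) < #cb.regions := by
    rw [mk_singleton]
    exact one_lt_iff_nontrivial.2 ⟨⟨A, hA⟩, ⟨D, hD⟩, by simpa using hAD⟩
  obtain ⟨B, hB, hBA, hBD⟩ := cb.exists_subregion_subset_mem_or_disjoint hA
    (singleton_subset_iff.2 hD) (pairwise_singleton _ _) hcard
  exact ⟨B, hB, hBA, by simpa using hBD⟩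

section GreedyPick

variable (P : Set X → Prop) (r : cb.regions → cb.regions → Prop)

open Classical in
noncomputable def greedyPick [IsWellFounded cb.regions r] : cb.regions → Option (Set X) :=
  IsWellFounded.fix r fun A pick =>
    if h : ∃ C ∈ cb.regions, C ⊆ A ∧ P C ∧ ∀ B (hB : r B A), ∀ C' ∈ pick B hB, Disjoint C C'
    then some h.choose else none

variable {r}

open Classical in
lemma greedyPick_eq [IsWellFounded cb.regions r] (A : cb.regions) :
    cb.greedyPick P r A =
      if h : ∃ C ∈ cb.regions, C ⊆ A ∧ P C ∧ ∀ B, r B A → ∀ C' ∈ cb.greedyPick P r B,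
        Disjoint C C'
      then some h.choose else none :=
  IsWellFounded.fix_eq r _ A

lemma greedyPick_spec [IsWellFounded cb.regions r] {A : cb.regions} {C : Set X}
    (h : cb.greedyPick P r A = some C) :
    C ∈ cb.regions ∧ C ⊆ A ∧ P C ∧
      ∀ B, r B A → ∀ C' ∈ cb.greedyPick P r B, Disjoint C C' := by
  rw [greedyPick_eq] at h
  split_ifs at h with hex
  exact Option.some_injective _ h ▸ hex.choose_spec

lemma greedyPick_ne_none [IsWellFounded cb.regions r] {A : cb.regions}
    (h : ∃ C ∈ cb.regions, C ⊆ A ∧ P C ∧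
      ∀ B, r B A → ∀ C' ∈ cb.greedyPick P r B, Disjoint C C') :
    cb.greedyPick P r A ≠ none := by
  rw [greedyPick_eq, dif_pos h]
  exact Option.some_ne_none _

lemma pairwise_disjoint_greedyPick [IsWellOrder cb.regions r] :
    (some ⁻¹' range (cb.greedyPick P r)).Pairwise Disjoint := by
  rintro C ⟨A, hA⟩ C' ⟨A', hA'⟩ hne
  rcases trichotomous_of r A A' with h | rfl | h
  · exact ((cb.greedyPick_spec P hA').2.2.2 A h C hA).symm
  · exact absurd (Option.some_injective _ (hA.symm.trans hA')) hne
  · exact (cb.greedyPick_spec P hA).2.2.2 A' h C' hA'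

end GreedyPick

theorem exists_pairwise_disjoint_dense (P : Set X → Prop)
    (hP : ∀ A ∈ cb.regions, ∃ B ∈ cb.regions, B ⊆ A ∧ P B) :
    ∃ 𝒟 : Set (Set X), 𝒟.Pairwise Disjoint ∧ (∀ C ∈ 𝒟, P C) ∧
      ∀ A ∈ cb.regions, ∃ B ∈ cb.regions, B ⊆ A ∧ ∃ C ∈ 𝒟, B ⊆ C := by
  obtain ⟨r, _, hord⟩ := exists_ord_eq cb.regions
  set pick := cb.greedyPick P r
  refine ⟨some ⁻¹' range pick, cb.pairwise_disjoint_greedyPick P,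
    fun C ⟨_, hA⟩ => (cb.greedyPick_spec P hA).2.2.1, fun A hA => ?_⟩
  cases hpick : pick ⟨A, hA⟩ with
  | some C =>
    obtain ⟨hC, hCA, -⟩ := cb.greedyPick_spec P hpick
    exact ⟨C, hC, hCA, C, ⟨_, hpick⟩, subset_rfl⟩
  | none =>
    set earlier := some ⁻¹' (pick '' {B | r B ⟨A, hA⟩})
    have hsub : earlier ⊆ some ⁻¹' range pick := preimage_mono (image_subset_range _ _)
    have hcard : #earlier < #cb.regions := calc
      #earlier ≤ #(pick '' {B | r B ⟨A, hA⟩}) :=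
        mk_preimage_of_injective _ _ (Option.some_injective _)
      _ ≤ #{B | r B ⟨A, hA⟩} := mk_image_le
      _ < #cb.regions := (Ordinal.card_typein (r := r) _).symm.trans_lt (card_typein_lt _ hord)
    have hregions : earlier ⊆ cb.regions := by
      rintro C ⟨_, -, hC⟩
      exact (cb.greedyPick_spec P hC).1
    obtain ⟨B, hB, hBA, ⟨C, hC, hBC⟩ | hdisj⟩ := cb.exists_subregion_subset_mem_or_disjoint hA
      hregions ((cb.pairwise_disjoint_greedyPick P).mono hsub) hcard
    · exact ⟨B, hB, hBA, C, hsub hC, hBC⟩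
    · obtain ⟨F, hF, hFB, hPF⟩ := hP B hB
      refine absurd hpick (cb.greedyPick_ne_none P ⟨F, hF, hFB.trans hBA, hPF, ?_⟩)
      exact fun A' hA' C' hC' => (hdisj C' ⟨A', hA', hC'⟩).mono_left hFB

theorem meager_of_pairwise_disjoint_dense {S : Set X} {𝒟 : Set (Set X)}
    (hdisj : 𝒟.Pairwise Disjoint) (hmeager : ∀ C ∈ 𝒟, cb.Meager (S ∩ C))
    (hdense : ∀ A ∈ cb.regions, ∃ B ∈ cb.regions, B ⊆ A ∧ ∃ C ∈ 𝒟, B ⊆ C) : cb.Meager S := by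
  choose g hg hSg using fun C : 𝒟 => hmeager C C.2
  have hgC : ∀ C n, g C n ⊆ C := fun C n =>
    ((hSg C).symm ▸ subset_iUnion (g C) n).trans inter_subset_right
  have hlayer : ∀ n, cb.Singular (⋃ C, g C n) := fun n =>
    singular_of_forall_exists_singular_inter fun A hA => by
      obtain ⟨B, hB, hBA, C, hC, hBC⟩ := hdense A hA
      refine ⟨B, hB, hBA, (hg ⟨C, hC⟩ n).mono ?_⟩
      rintro z ⟨hz, hzB⟩
      obtain ⟨C', hzC'⟩ := mem_iUnion.1 hz
      obtain rfl : C' = ⟨C, hC⟩ :=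
        Subtype.ext (PairwiseDisjoint.elim_set hdisj C'.2 hC z (hgC C' n hzC') (hBC hzB))
      exact hzC'
  have hrest : cb.Singular (S \ ⋃₀ 𝒟) :=
    singular_of_forall_exists_singular_inter fun A hA => by
      obtain ⟨B, hB, hBA, C, hC, hBC⟩ := hdense A hA
      exact ⟨B, hB, hBA, (singular_empty cb).mono fun z ⟨hz, hzB⟩ => hz.2 ⟨C, hC, hBC hzB⟩⟩
  refine (hrest.meager.union (Meager.iUnion fun n => (hlayer n).meager)).mono fun z hz => ?_
  by_cases hz𝒟 : z ∈ ⋃₀ 𝒟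
  · obtain ⟨C, hC, hzC⟩ := hz𝒟
    obtain ⟨n, hn⟩ := mem_iUnion.1 ((hSg ⟨C, hC⟩) ▸ ⟨hz, hzC⟩ : z ∈ ⋃ n, g ⟨C, hC⟩ n)
    exact Or.inr (mem_iUnion.2 ⟨n, mem_iUnion.2 ⟨_, hn⟩⟩)
  · exact Or.inl ⟨hz, hz𝒟⟩

theorem meager_of_forall_exists_meager_inter {S : Set X}
    (h : ∀ A ∈ cb.regions, ∃ B ∈ cb.regions, B ⊆ A ∧ cb.Meager (S ∩ B)) : cb.Meager S :=
  let ⟨_, hdisj, hmeager, hdense⟩ := cb.exists_pairwise_disjoint_dense _ h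
  cb.meager_of_pairwise_disjoint_dense hdisj hmeager hdense

theorem exists_subregion_meager_diff_of_baire {B D : Set X} (hB : cb.Baire B)
    (hBD : cb.Abundant (B ∩ D)) (hD : D ∈ cb.regions) :
    ∃ C ∈ cb.regions, C ⊆ D ∧ cb.Meager (C \ B) := by
  by_contra! hno
  refine hBD (cb.meager_of_forall_exists_meager_inter fun E hE => ?_)
  obtain ⟨F, hF, hFE, hFD | hFD⟩ := cb.exists_subregion_subset_or_disjoint hE hD
  · obtain ⟨G, hG, hGF, hBG | hBG⟩ := hB F hF
    · exact ⟨G, hG, hGF.trans hFE, hBG.mono fun z hz => ⟨hz.1.1, hz.2⟩⟩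
    · exact absurd (hBG.mono fun z hz => ⟨hz.2, hz.1⟩) (hno G hG (hGF.trans hFD))
  · refine ⟨F, hF, hFE, (meager_empty cb).mono ?_⟩
    exact (hFD.symm.mono_left inter_subset_right).inter_eq.subset

end CatBase

theorem stmt13_general {X : Type*} (cb : CatBase X)
    {A D : Set X}
    (hD : D ∈ cb.regions)
    (htest : ∀ E ∈ cb.regions, E ⊆ D → cb.Abundant (A ∩ E) ∧ cb.Abundant (Aᶜ ∩ E)) :
    ∀ B : Set X, cb.Baire B → cb.Abundant (B ∩ D) →
      (∃ C ∈ cb.regions, C ⊆ D ∧ cb.Meager (C \ B)) ∧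
      cb.Abundant (B ∩ A) ∧ cb.Abundant (B ∩ (D \ A)) := by
  intro B hB hBD
  obtain ⟨C, hC, hCD, hCB⟩ := cb.exists_subregion_meager_diff_of_baire hB hBD hD
  obtain ⟨hAC, hAcC⟩ := htest C hC hCD
  refine ⟨⟨C, hC, hCD, hCB⟩, hAC.of_meager_diff (hCB.mono ?_), hAcC.of_meager_diff (hCB.mono ?_)⟩
  · rintro z ⟨⟨hzA, hzC⟩, hzBA⟩
    exact ⟨hzC, fun hzB => hzBA ⟨hzB, hzA⟩⟩
  · rintro z ⟨⟨hzA, hzC⟩, hz⟩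
    exact ⟨hzC, fun hzB => hz ⟨hzB, hCD hzC, hzA⟩⟩

theorem stmt13 {X : Type*} (cb : CatBase X)
    (hBaire : ∀ A ∈ cb.regions, cb.Abundant A) {A D : Set X}
    (hD : D ∈ cb.regions)
    (htest : ∀ E ∈ cb.regions, E ⊆ D → cb.Abundant (A ∩ E) ∧ cb.Abundant (Aᶜ ∩ E)) :
    ∀ B : Set X, cb.Baire B → cb.Abundant (B ∩ D) →
      (∃ C ∈ cb.regions, C ⊆ D ∧ cb.Meager (C \ B)) ∧
      cb.Abundant (B ∩ A) ∧ cb.Abundant (B ∩ (D \ A)) :=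
  stmt13_general cb hD htest
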